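/- Let 𝔽 be a maximal closed generalized flag in V and u ∈ V nonzero. Let St_𝔽 be the stabilizer of 𝔽 in 𝔰𝔩(V,V_*). Then St_𝔽 · u = F'_u if the closure of F'_u equals F''_u, or if F'_u ⊂ F''_u is the only good pair of 𝔽; and St_𝔽 · u = F''_u otherwise. -/

import Mathlib

open TensorProduct

/-- The perpendicular complement of a subspace with respect to a pairing. -/
def perp {X Y : Type*} [AddCommGroup X] [Module ℂ X] [AddCommGroup Y] [Module ℂ Y]
    (B : X →ₗ[ℂ] Y →ₗ[ℂ] ℂ) (F : Submodule ℂ X) : Submodule ℂ Y where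
  carrier := {y | ∀ x ∈ F, B x y = 0}
  add_mem' := by intro a b ha hb x hx; simp [map_add, ha x hx, hb x hx]
  zero_mem' := by intro x hx; simp
  smul_mem' := by intro c a ha x hx; simp [ha x hx]

/-- The closure of a subspace of `V` with respect to the pairing:
its double perpendicular complement. -/
def clos {X Y : Type*} [AddCommGroup X] [Module ℂ X] [AddCommGroup Y] [Module ℂ Y]
    (B : X →ₗ[ℂ] Y →ₗ[ℂ] ℂ) (F : Submodule ℂ X) : Submodule ℂ X :=
  perp B.flip (perp B F)

/-- `F` and `G` form an immediate predecessor-successor pair of the chain `C`. -/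
def ImmPair {V : Type*} [AddCommGroup V] [Module ℂ V]
    (C : Set (Submodule ℂ V)) (F G : Submodule ℂ V) : Prop :=
  F ∈ C ∧ G ∈ C ∧ F < G ∧ ∀ H ∈ C, ¬(F < H ∧ H < G)

/-- A generalized flag in `V`. -/
structure GenFlag (V : Type*) [AddCommGroup V] [Module ℂ V] where
  carrier : Set (Submodule ℂ V)
  chain : IsChain (· ≤ ·) carrier
  neighbor : ∀ F ∈ carrier,
    (∃ G, ImmPair carrier G F) ∨ (∃ G, ImmPair carrier F G)
  covers : ∀ x : V, x ≠ 0 → ∃ F G, ImmPair carrier F G ∧ x ∈ G ∧ x ∉ F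

/-- A closed generalized flag: every immediate successor is closed, and the
closure of every immediate predecessor is either itself or its successor. -/
def GenFlag.IsClosed {V Y : Type*} [AddCommGroup V] [Module ℂ V]
    [AddCommGroup Y] [Module ℂ Y] (B : V →ₗ[ℂ] Y →ₗ[ℂ] ℂ) (𝔽 : GenFlag V) : Prop :=
  ∀ F G : Submodule ℂ V, ImmPair 𝔽.carrier F G →
    clos B G = G ∧ (clos B F = F ∨ clos B F = G)

/-- A good pair of a closed generalized flag: an immediate
predecessor-successor pair whose predecessor is closed. -/
def GoodPair {V Y : Type*} [AddCommGroup V] [Module ℂ V]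
    [AddCommGroup Y] [Module ℂ Y] (B : V →ₗ[ℂ] Y →ₗ[ℂ] ℂ)
    (C : Set (Submodule ℂ V)) (F G : Submodule ℂ V) : Prop :=
  ImmPair C F G ∧ clos B F = F

/-- A maximal closed generalized flag: a closed generalized flag in which
every good pair has codimension one. -/
def GenFlag.IsMaxClosed {V Y : Type*} [AddCommGroup V] [Module ℂ V]
    [AddCommGroup Y] [Module ℂ Y] (B : V →ₗ[ℂ] Y →ₗ[ℂ] ℂ) (𝔽 : GenFlag V) : Prop :=
  𝔽.IsClosed B ∧ ∀ F G : Submodule ℂ V, GoodPair B 𝔽.carrier F G →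
    Module.rank ℂ (↥G ⧸ (F.comap G.subtype)) = 1

/-- The action of `𝔤𝔩(V,V_*) = V ⊗ V_*` on `V`: `(v ⊗ w) · u = ⟨u, w⟩ v`. -/
noncomputable def toEnd {V W : Type*} [AddCommGroup V] [Module ℂ V]
    [AddCommGroup W] [Module ℂ W] (B : V →ₗ[ℂ] W →ₗ[ℂ] ℂ) :
    V ⊗[ℂ] W →ₗ[ℂ] Module.End ℂ V :=
  TensorProduct.lift <| LinearMap.mk₂ ℂ (fun v w => (B.flip w).smulRight v)
    (fun v v' w => by ext u; simp)
    (fun c v w => by ext u; exact smul_comm _ _ _)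
    (fun v w w' => by ext u; simp [add_smul])
    (fun c v w => by ext u; simp [smul_smul, mul_comm])

attribute [local instance 100] LieRing.ofAssociativeRing

/-- `𝔰𝔩(V,V_*)`, the commutator subalgebra `[𝔤𝔩(V,V_*), 𝔤𝔩(V,V_*)]` of
`𝔤𝔩(V,V_*) = V ⊗ V_*`, realized inside `End V`: the Lie subalgebra generated
by brackets of elements of `V ⊗ V_*`. -/
noncomputable def slB {V W : Type*} [AddCommGroup V] [Module ℂ V]
    [AddCommGroup W] [Module ℂ W] (B : V →ₗ[ℂ] W →ₗ[ℂ] ℂ) :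
    LieSubalgebra ℂ (Module.End ℂ V) :=
  LieSubalgebra.lieSpan ℂ (Module.End ℂ V)
    {z | ∃ t s : V ⊗[ℂ] W, z = ⁅toEnd B t, toEnd B s⁆}

/-- The stabilizer in `𝔰𝔩(V,V_*)` of a family `C` of subspaces of `V`,
as a subset of `End V`. -/
noncomputable def slStab {V W : Type*} [AddCommGroup V] [Module ℂ V]
    [AddCommGroup W] [Module ℂ W] (B : V →ₗ[ℂ] W →ₗ[ℂ] ℂ)
    (C : Set (Submodule ℂ V)) : Set (Module.End ℂ V) :=
  {f | f ∈ slB B ∧ ∀ F ∈ C, ∀ x ∈ F, f x ∈ F}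


section Aux
variable {V W : Type*} [AddCommGroup V] [Module ℂ V] [AddCommGroup W] [Module ℂ W]
variable (B : V →ₗ[ℂ] W →ₗ[ℂ] ℂ)

lemma mem_perp {F : Submodule ℂ V} {w : W} : w ∈ perp B F ↔ ∀ x ∈ F, B x w = 0 := Iff.rfl

lemma mem_clos {F : Submodule ℂ V} {x : V} : x ∈ clos B F ↔ ∀ w ∈ perp B F, B x w = 0 := by
  constructor
  · intro h w hw; exact h w hw
  · intro h w hw; exact h w hw

lemma le_clos (F : Submodule ℂ V) : F ≤ clos B F := by
  intro x hx w hw; exact hw x hx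

@[simp] lemma toEnd_tmul (v : V) (w : W) (x : V) : toEnd B (v ⊗ₜ[ℂ] w) x = B x w • v := by
  simp [toEnd]

lemma toEnd_sum_apply (s : Finset (V × W)) (x : V) :
    toEnd B (∑ p ∈ s, p.1 ⊗ₜ[ℂ] p.2) x = ∑ p ∈ s, B x p.2 • p.1 := by
  rw [map_sum]; simp [LinearMap.sum_apply]

lemma bracket_tmul (a : V) (b : W) (c : V) (d : W) :
    ⁅toEnd B (a ⊗ₜ[ℂ] b), toEnd B (c ⊗ₜ[ℂ] d)⁆ =
      B c b • toEnd B (a ⊗ₜ[ℂ] d) - B a d • toEnd B (c ⊗ₜ[ℂ] b) := by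
  ext x
  simp only [LieRing.of_associative_ring_bracket, LinearMap.sub_apply, Module.End.mul_apply,
    LinearMap.smul_apply, toEnd_tmul, map_smul, smul_eq_mul, smul_smul]
  ring_nf

end Aux

section Aux2
variable {V W : Type*} [AddCommGroup V] [Module ℂ V] [AddCommGroup W] [Module ℂ W]
variable (B : V →ₗ[ℂ] W →ₗ[ℂ] ℂ)

/-- A traceless rank-one operator lies in `slB`. -/
lemma mem_slB_rank_one (hB₁ : ∀ v : V, (∀ w : W, B v w = 0) → v = 0)
    (y : V) (w : W) (hy : y ≠ 0) (h0 : B y w = 0) : toEnd B (y ⊗ₜ[ℂ] w) ∈ slB B := by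
  have hex : ∃ w' : W, B y w' ≠ 0 := by
    by_contra h
    push_neg at h
    exact hy (hB₁ y h)
  obtain ⟨w', hw'⟩ := hex
  have key : ⁅toEnd B (y ⊗ₜ[ℂ] ((B y w')⁻¹ • w')), toEnd B (y ⊗ₜ[ℂ] w)⁆ = toEnd B (y ⊗ₜ[ℂ] w) := by
    rw [bracket_tmul]
    simp [h0, inv_mul_cancel₀ hw']
  have : toEnd B (y ⊗ₜ[ℂ] w) ∈
      {z : Module.End ℂ V | ∃ t s : V ⊗[ℂ] W, z = ⁅toEnd B t, toEnd B s⁆} :=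
    ⟨_, _, key.symm⟩
  exact LieSubalgebra.subset_lieSpan this

/-- A difference of two rank-one operators with matching "trace one" entries lies in `slB`. -/
lemma mem_slB_pair (u z : V) (w w' : W) (h1 : B u w = 1) (h2 : B z w' = 1) :
    toEnd B (u ⊗ₜ[ℂ] w) - toEnd B (z ⊗ₜ[ℂ] w') ∈ slB B := by
  have key : ⁅toEnd B (u ⊗ₜ[ℂ] w'), toEnd B (z ⊗ₜ[ℂ] w)⁆ =
      toEnd B (u ⊗ₜ[ℂ] w) - toEnd B (z ⊗ₜ[ℂ] w') := by
    rw [bracket_tmul, h1, h2, one_smul, one_smul]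
  exact LieSubalgebra.subset_lieSpan ⟨_, _, key.symm⟩

/-- Separation of a point from a submodule in a finite-dimensional space. -/
lemma exists_functional {ι : Type*} [Fintype ι] (p : Submodule ℂ (ι → ℂ)) (v : ι → ℂ)
    (hv : v ∉ p) : ∃ lam : (ι → ℂ) →ₗ[ℂ] ℂ, (∀ y ∈ p, lam y = 0) ∧ lam v ≠ 0 := by
  have hv' : p.mkQ v ≠ 0 := by
    simpa [Submodule.Quotient.mk_eq_zero] using hv
  have := (Module.forall_dual_apply_eq_zero_iff ℂ (p.mkQ v)).not
  rw [not_forall] at this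
  obtain ⟨φ, hφ⟩ := this.mpr hv'
  refine ⟨φ ∘ₗ p.mkQ, fun y hy => ?_, hφ⟩
  rw [LinearMap.comp_apply, show p.mkQ y = 0 by simpa [Submodule.Quotient.mk_eq_zero] using hy,
    map_zero]

/-- Lemma A: a finite-rank operator preserving `F` maps `clos B F` into `F`. -/
lemma toEnd_clos_mem (t : V ⊗[ℂ] W) (F : Submodule ℂ V)
    (hF : ∀ x ∈ F, toEnd B t x ∈ F) :
    ∀ x ∈ clos B F, toEnd B t x ∈ F := by
  classical
  obtain ⟨s, rfl⟩ := TensorProduct.exists_finset t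
  intro x hx
  set Φ : V →ₗ[ℂ] (s → ℂ) := LinearMap.pi (fun p => B.flip (p : V × W).2) with hΦ
  have key : Φ x ∈ Submodule.map Φ F := by
    by_contra hmem
    obtain ⟨lam, hlam0, hlamv⟩ := exists_functional (Submodule.map Φ F) (Φ x) hmem
    set w : W := ∑ p : s, lam (fun j => if p = j then (1:ℂ) else 0) • (p : V × W).2 with hw
    have hBw : ∀ v : V, B v w = lam (Φ v) := by
      intro v
      rw [hw, map_sum]
      rw [lam.pi_apply_eq_sum_univ (Φ v)]
      refine Finset.sum_congr rfl fun p _ => ?_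
      simp [hΦ, LinearMap.pi_apply, smul_eq_mul, mul_comm]
    have hwperp : w ∈ perp B F := by
      intro x' hx'
      rw [hBw]
      exact hlam0 _ ⟨x', hx', rfl⟩
    have hx0 : B x w = 0 := (mem_clos B).mp hx w hwperp
    rw [hBw] at hx0
    exact hlamv hx0
  obtain ⟨x', hx'F, hΦx⟩ := key
  have : toEnd B (∑ p ∈ s, p.1 ⊗ₜ[ℂ] p.2) x = toEnd B (∑ p ∈ s, p.1 ⊗ₜ[ℂ] p.2) x' := by
    rw [toEnd_sum_apply, toEnd_sum_apply]
    rw [← Finset.sum_attach s (fun p => B x p.2 • p.1), ← Finset.sum_attach s (fun p => B x' p.2 • p.1)]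
    refine Finset.sum_congr rfl fun p _ => ?_
    have : B x' (p : V × W).2 = B x (p : V × W).2 := congrFun hΦx p
    rw [this]
  rw [this]
  exact hF x' hx'F

end Aux2

section Aux3
variable {V W : Type*} [AddCommGroup V] [Module ℂ V] [AddCommGroup W] [Module ℂ W]
variable (B : V →ₗ[ℂ] W →ₗ[ℂ] ℂ)

lemma toEnd_rTensor (t s : V ⊗[ℂ] W) :
    toEnd B (LinearMap.rTensor W (toEnd B t) s) = toEnd B t ∘ₗ toEnd B s := by
  induction s using TensorProduct.induction_on with
  | zero => simp
  | tmul v w =>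
      ext x
      simp
  | add s₁ s₂ h1 h2 =>
      simp only [map_add, h1, h2]
      ext x; simp

lemma lift_rTensor_symm (t s : V ⊗[ℂ] W) :
    TensorProduct.lift B (LinearMap.rTensor W (toEnd B t) s) =
      TensorProduct.lift B (LinearMap.rTensor W (toEnd B s) t) := by
  induction t using TensorProduct.induction_on with
  | zero => simp
  | tmul a b =>
      induction s using TensorProduct.induction_on with
      | zero => simp
      | tmul c d => simp [mul_comm]
      | add s₁ s₂ h1 h2 =>
          simp only [map_add, LinearMap.rTensor_add, LinearMap.add_apply, h1, h2]
  | add t₁ t₂ h1 h2 =>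
      simp only [map_add, LinearMap.rTensor_add, LinearMap.add_apply, h1, h2]

/-- Every element of `slB` is of the form `toEnd B t` with vanishing trace form. -/
lemma slB_repr {f : Module.End ℂ V} (hf : f ∈ slB B) :
    ∃ t : V ⊗[ℂ] W, toEnd B t = f ∧ TensorProduct.lift B t = 0 := by
  let S : Submodule ℂ (Module.End ℂ V) :=
    Submodule.map (toEnd B) (LinearMap.ker (TensorProduct.lift B))
  let K : LieSubalgebra ℂ (Module.End ℂ V) :=
    { S with
      lie_mem' := by
        rintro a b ⟨t, ht, rfl⟩ ⟨s, hs, rfl⟩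
        refine ⟨LinearMap.rTensor W (toEnd B t) s - LinearMap.rTensor W (toEnd B s) t, ?_, ?_⟩
        · simp only [SetLike.mem_coe, LinearMap.mem_ker]; rw [map_sub, lift_rTensor_symm B t s, sub_self]
        · rw [map_sub, toEnd_rTensor, toEnd_rTensor, LieRing.of_associative_ring_bracket]
          rfl }
  have hle : slB B ≤ K := by
    apply LieSubalgebra.lieSpan_le.mpr
    rintro z ⟨t, s, rfl⟩
    refine ⟨LinearMap.rTensor W (toEnd B t) s - LinearMap.rTensor W (toEnd B s) t, ?_, ?_⟩
    · simp only [SetLike.mem_coe, LinearMap.mem_ker]; rw [map_sub, lift_rTensor_symm B t s, sub_self]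
    · rw [map_sub, toEnd_rTensor, toEnd_rTensor, LieRing.of_associative_ring_bracket]
      rfl
  obtain ⟨t, ht, rfl⟩ := hle hf
  exact ⟨t, rfl, ht⟩

end Aux3

section Aux4
variable {V W : Type*} [AddCommGroup V] [Module ℂ V] [AddCommGroup W] [Module ℂ W]
variable (B : V →ₗ[ℂ] W →ₗ[ℂ] ℂ)

/-- For a pair `(F, G)` of a chain, every member `H` satisfies `H ≤ F` or `G ≤ H`. -/
lemma pair_le_or_le {C : Set (Submodule ℂ V)} (hC : IsChain (· ≤ ·) C)
    {F G H : Submodule ℂ V} (hp : ImmPair C F G) (hH : H ∈ C) : H ≤ F ∨ G ≤ H := by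
  obtain ⟨hF, hG, hFG, himm⟩ := hp
  rcases eq_or_ne H F with rfl | hHF
  · exact Or.inl le_rfl
  rcases eq_or_ne H G with rfl | hHG
  · exact Or.inr le_rfl
  rcases hC.total hH hF with h | h
  · exact Or.inl h
  rcases hC.total hH hG with h' | h'
  · exact absurd ⟨lt_of_le_of_ne h (Ne.symm hHF), lt_of_le_of_ne h' hHG⟩ (himm H hH)
  · exact Or.inr h'

/-- Distinct pairs of a chain are separated. -/
lemma pairs_separated {C : Set (Submodule ℂ V)} (hC : IsChain (· ≤ ·) C)
    {F G F₂ G₂ : Submodule ℂ V} (hp : ImmPair C F G) (hp₂ : ImmPair C F₂ G₂)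
    (hne : ¬(F₂ = F ∧ G₂ = G)) : G₂ ≤ F ∨ G ≤ F₂ := by
  rcases pair_le_or_le hC hp hp₂.2.1 with h | h
  · exact Or.inl h
  rcases pair_le_or_le hC hp hp₂.1 with h' | h'
  · -- F₂ ≤ F and G ≤ G₂
    exfalso
    rcases eq_or_ne F₂ F with rfl | hFF
    · rcases eq_or_ne G₂ G with rfl | hGG
      · exact hne ⟨rfl, rfl⟩
      · exact hp₂.2.2.2 G hp.2.1 ⟨hp.2.2.1, lt_of_le_of_ne h (Ne.symm hGG)⟩
    · exact hp₂.2.2.2 F hp.1 ⟨lt_of_le_of_ne h' hFF, lt_of_lt_of_le hp.2.2.1 h⟩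
  · exact Or.inr h'

/-- A rank-one operator `v ⊗ w` with `w ⊥ F` and `v ∈ G` stabilizes the whole chain. -/
lemma stab_rank_one {C : Set (Submodule ℂ V)} (hC : IsChain (· ≤ ·) C)
    {F G : Submodule ℂ V} (hp : ImmPair C F G) {v : V} {w : W}
    (hw : w ∈ perp B F) (hv : v ∈ G) :
    ∀ H ∈ C, ∀ x ∈ H, toEnd B (v ⊗ₜ[ℂ] w) x ∈ H := by
  intro H hH x hx
  rw [toEnd_tmul]
  rcases pair_le_or_le hC hp hH with h | h
  · rw [hw x (h hx), zero_smul]; exact H.zero_mem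
  · exact H.smul_mem _ (h hv)

end Aux4

section Aux5
variable {V W : Type*} [AddCommGroup V] [Module ℂ V] [AddCommGroup W] [Module ℂ W]
variable (B : V →ₗ[ℂ] W →ₗ[ℂ] ℂ)

lemma descent_key (𝔽 : GenFlag V) (f : Module.End ℂ V)
    (hdiag : ∀ F G, ImmPair 𝔽.carrier F G → ∀ x ∈ G, f x ∈ F)
    {y : V} {F G F₁ G₁ : Submodule ℂ V}
    (hyp : ImmPair 𝔽.carrier F G) (hy : y ∈ G)
    (hfp : ImmPair 𝔽.carrier F₁ G₁) (hfy' : f y ∉ F₁) :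
    G₁ ≤ F := by
  have hfyF : f y ∈ F := hdiag F G hyp y hy
  rcases pair_le_or_le 𝔽.chain hfp hyp.1 with h | h
  · exact absurd (h hfyF) hfy'
  · exact h

lemma descent_indep (𝔽 : GenFlag V) (f : Module.End ℂ V)
    (hdiag : ∀ F G, ImmPair 𝔽.carrier F G → ∀ x ∈ G, f x ∈ F) :
    ∀ (m : ℕ) (x : V), (f ^ (m + 1)) x ≠ 0 →
      ∃ F G, ImmPair 𝔽.carrier F G ∧ f x ∈ G ∧ f x ∉ F ∧
        LinearIndependent ℂ (fun j : Fin (m + 1) => (f ^ (j.1 + 1)) x) ∧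
        Submodule.span ℂ (Set.range fun j : Fin (m + 1) => (f ^ (j.1 + 1)) x) ≤ G := by
  intro m
  induction m with
  | zero =>
      intro x hx
      have hfx : f x ≠ 0 := by simpa [pow_one] using hx
      obtain ⟨F, G, hp, hyG, hyF⟩ := 𝔽.covers (f x) hfx
      haveI : Unique (Fin (0 + 1)) := inferInstanceAs (Unique (Fin 1))
      refine ⟨F, G, hp, hyG, hyF, ?_, ?_⟩
      · refine linearIndependent_unique_iff.mpr ?_
        simpa [pow_one] using hfx
      · rw [Submodule.span_le]
        rintro _ ⟨j, rfl⟩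
        have hj : j = (default : Fin (0 + 1)) := Subsingleton.elim _ _
        subst hj
        simpa [pow_one] using hyG
  | succ m ih =>
      intro x hx
      have hsplit : (f ^ (m + 1 + 1)) x = (f ^ (m + 1)) (f x) := by
        rw [pow_succ, Module.End.mul_apply]
      have hfx1 : (f ^ (m + 1)) (f x) ≠ 0 := by rw [← hsplit]; exact hx
      obtain ⟨F₁, G₁, hp₁, hG₁, hF₁, hind, hspan⟩ := ih (f x) hfx1
      have hfx0 : f x ≠ 0 := by
        intro h
        rw [h, map_zero] at hfx1
        exact hfx1 rfl
      obtain ⟨F₀, G₀, hp₀, h0G, h0F⟩ := 𝔽.covers (f x) hfx0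
      have hkey : G₁ ≤ F₀ := descent_key 𝔽 f hdiag hp₀ h0G hp₁ hF₁
      have hfam : (fun j : Fin (m + 2) => (f ^ (j.1 + 1)) x) =
          Fin.cons (f x) (fun j : Fin (m + 1) => (f ^ (j.1 + 1)) (f x)) := by
        funext j
        refine Fin.cases ?_ ?_ j
        · simp [pow_one]
        · intro i
          rw [Fin.cons_succ]
          have : ((i.succ : Fin (m + 2)) : ℕ) = i.1 + 1 := rfl
          rw [this, pow_succ, Module.End.mul_apply]
      refine ⟨F₀, G₀, hp₀, h0G, h0F, ?_, ?_⟩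
      · rw [hfam]
        refine linearIndependent_fin_cons.mpr ⟨hind, fun hmem => ?_⟩
        exact h0F (hkey (hspan hmem))
      · rw [hfam, Submodule.span_le]
        rintro _ ⟨j, rfl⟩
        refine Fin.cases ?_ ?_ j
        · simpa using h0G
        · intro i
          rw [Fin.cons_succ]
          refine hp₀.2.2.1.le (hkey (hspan (Submodule.subset_span ⟨i, rfl⟩)))

lemma lemB (𝔽 : GenFlag V) (t : V ⊗[ℂ] W)
    (hdiag : ∀ F G, ImmPair 𝔽.carrier F G → ∀ x ∈ G, toEnd B t x ∈ F) :
    TensorProduct.lift B t = 0 := by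
  classical
  obtain ⟨s, rfl⟩ := TensorProduct.exists_finset t
  set f := toEnd B (∑ p ∈ s, p.1 ⊗ₜ[ℂ] p.2) with hf
  set M : Submodule ℂ V := Submodule.span ℂ (↑(s.image Prod.fst)) with hM
  haveI hMfd : FiniteDimensional ℂ M := by
    apply FiniteDimensional.span_of_finite
    exact (s.image Prod.fst).finite_toSet
  have hp1M : ∀ p ∈ s, (p : V × W).1 ∈ M := by
    intro p hp
    apply Submodule.subset_span
    simp only [Finset.coe_image, Set.mem_image, Finset.mem_coe]
    exact ⟨p, hp, rfl⟩
  have him : ∀ x, f x ∈ M := by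
    intro x
    rw [hf, toEnd_sum_apply]
    exact Submodule.sum_mem _ fun p hp => Submodule.smul_mem _ _ (hp1M p hp)
  set n := Module.finrank ℂ M with hn
  have hnil : ∀ x, (f ^ (n + 1)) x = 0 := by
    intro x
    by_contra hx
    obtain ⟨F, G, hp, _, _, hind, _⟩ := descent_indep 𝔽 f hdiag n x hx
    have hval : ∀ j : Fin (n + 1), (f ^ (j.1 + 1)) x ∈ M := by
      intro j
      rw [pow_succ', Module.End.mul_apply]
      exact him _
    have hindM : LinearIndependent ℂ (fun j : Fin (n + 1) => (⟨(f ^ (j.1 + 1)) x, hval j⟩ : M)) := by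
      apply LinearIndependent.of_comp M.subtype
      exact hind
    have hcard := hindM.fintype_card_le_finrank
    rw [Fintype.card_fin] at hcard
    omega
  have hfn : f ^ (n + 1) = 0 := LinearMap.ext hnil
  have hres : ∀ x ∈ M, f x ∈ M := fun x _ => him x
  set g := f.restrict hres with hg
  have hgnil : IsNilpotent g := by
    refine ⟨n + 1, ?_⟩
    rw [hg, Module.End.pow_restrict]
    ext x
    simp [LinearMap.restrict_apply, hfn]
  have htr0 : LinearMap.trace ℂ M g = 0 :=
    (LinearMap.isNilpotent_trace_of_isNilpotent hgnil).eq_zero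
  -- identify the trace with the contraction
  have hgsum : g = ∑ p ∈ s.attach, (dualTensorHom ℂ M M)
      (((B.flip (p : V × W).2) ∘ₗ M.subtype) ⊗ₜ[ℂ] ⟨(p : V × W).1, hp1M p p.2⟩) := by
    ext x
    have h1 : (g x : V) = f (x : V) := rfl
    rw [h1, hf, toEnd_sum_apply, LinearMap.sum_apply, Submodule.coe_sum,
      ← Finset.sum_attach s (fun p => B (x : V) p.2 • p.1)]
    refine Finset.sum_congr rfl fun p _ => ?_
    simp [dualTensorHom_apply]
  have : TensorProduct.lift B (∑ p ∈ s, p.1 ⊗ₜ[ℂ] p.2) = LinearMap.trace ℂ M g := by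
    rw [hgsum, map_sum, map_sum]
    rw [← Finset.sum_attach s (fun p => TensorProduct.lift B (p.1 ⊗ₜ[ℂ] p.2))]
    refine Finset.sum_congr rfl fun p _ => ?_
    rw [LinearMap.trace_eq_contract_apply]
    simp [contractLeft_apply]
  rw [this, htr0]

end Aux5

section Aux6
variable {V W : Type*} [AddCommGroup V] [Module ℂ V] [AddCommGroup W] [Module ℂ W]
variable (B : V →ₗ[ℂ] W →ₗ[ℂ] ℂ)

lemma exists_w_single (P : Submodule ℂ V) (u : V) (hu : u ∉ clos B P) :
    ∃ w ∈ perp B P, B u w = 1 := by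
  have : ¬ ∀ w ∈ perp B P, B u w = 0 := fun h => hu ((mem_clos B).mpr h)
  push_neg at this
  obtain ⟨w₀, hw₀P, hw₀⟩ := this
  exact ⟨(B u w₀)⁻¹ • w₀, Submodule.smul_mem _ _ hw₀P, by
    simp [smul_eq_mul, inv_mul_cancel₀ hw₀]⟩

lemma exists_w (P : Submodule ℂ V) (u y : V) (hu : u ∉ clos B P)
    (hyu : ∀ c : ℂ, c ≠ 0 → y - c • u ∉ clos B P) :
    ∃ w ∈ perp B P, B u w = 1 ∧ B y w = 0 := by
  obtain ⟨w₁, hw₁P, hw₁⟩ := exists_w_single B P u hu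
  rcases eq_or_ne (B y w₁) 0 with h0 | h0
  · exact ⟨w₁, hw₁P, hw₁, h0⟩
  · set c := B y w₁ with hc
    have h2 : ¬ ∀ w ∈ perp B P, B (y - c • u) w = 0 :=
      fun h => hyu c h0 ((mem_clos B).mpr h)
    push_neg at h2
    obtain ⟨w₂, hw₂P, hw₂⟩ := h2
    set a := B u w₂ with ha
    set b := B y w₂ with hb
    have hd : b - c * a ≠ 0 := by
      intro h
      apply hw₂
      have heq : B (y - c • u) w₂ = b - c * a := by
        simp only [map_sub, map_smul, LinearMap.sub_apply, LinearMap.smul_apply, smul_eq_mul,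
          ← hb, ← ha]
      rw [heq, h]
    set d := b - c * a with hdd
    refine ⟨(b / d) • w₁ - (c / d) • w₂, Submodule.sub_mem _
      (Submodule.smul_mem _ _ hw₁P) (Submodule.smul_mem _ _ hw₂P), ?_, ?_⟩
    · rw [map_sub, map_smul, map_smul]
      simp only [smul_eq_mul, hw₁, ← ha]
      field_simp
      exact hdd.symm
    · rw [map_sub, map_smul, map_smul]
      simp only [smul_eq_mul, ← hc, ← hb]
      field_simp
      ring

lemma quot_rank_one {F G : Submodule ℂ V}
    (hrk : Module.rank ℂ (↥G ⧸ (F.comap G.subtype)) = 1)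
    {u : V} (huG : u ∈ G) (huF : u ∉ F) :
    ∀ x ∈ G, ∃ c : ℂ, x - c • u ∈ F := by
  set P := F.comap G.subtype with hP
  obtain ⟨v₀, hv₀ne, hv₀⟩ := rank_eq_one_iff.mp hrk
  have huπ : P.mkQ ⟨u, huG⟩ ≠ 0 := by
    rw [Submodule.mkQ_apply, Ne, Submodule.Quotient.mk_eq_zero]
    simpa [hP, Submodule.mem_comap] using huF
  obtain ⟨r, hr⟩ := hv₀ (P.mkQ ⟨u, huG⟩)
  have hrne : r ≠ 0 := fun h => huπ (by rw [← hr, h, zero_smul])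
  intro x hx
  obtain ⟨cx, hcx⟩ := hv₀ (P.mkQ ⟨x, hx⟩)
  refine ⟨cx * r⁻¹, ?_⟩
  have hz : P.mkQ (⟨x, hx⟩ - (cx * r⁻¹) • ⟨u, huG⟩) = 0 := by
    rw [map_sub, map_smul, ← hcx, ← hr, smul_smul]
    rw [mul_assoc, inv_mul_cancel₀ hrne, mul_one, sub_self]
  rw [Submodule.mkQ_apply, Submodule.Quotient.mk_eq_zero] at hz
  simpa [hP, Submodule.mem_comap, sub_smul] using hz

end Aux6

section Aux7
variable {V W : Type*} [AddCommGroup V] [Module ℂ V] [AddCommGroup W] [Module ℂ W]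
variable (B : V →ₗ[ℂ] W →ₗ[ℂ] ℂ)

/-- Every element of `F'` is realized as `f u` for some `f` in the stabilizer. -/
lemma exists_stab_eq (hB₁ : ∀ v : V, (∀ w : W, B v w = 0) → v = 0)
    (𝔽 : GenFlag V) (hclosed : 𝔽.IsClosed B)
    {F' F'' : Submodule ℂ V} (hpair : ImmPair 𝔽.carrier F' F'')
    {u : V} (huF'' : u ∈ F'') (huF' : u ∉ F')
    (y : V) (hy : y ∈ F') : ∃ f ∈ slStab B 𝔽.carrier, f u = y := by
  rcases eq_or_ne y 0 with rfl | hy0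
  · exact ⟨0, ⟨(slB B).zero_mem, fun F _ x _ => by simpa using F.zero_mem⟩, by simp⟩
  obtain ⟨Fy', Fy'', hyp, hyG, hyF⟩ := 𝔽.covers y hy0
  have hne : ¬(Fy' = F' ∧ Fy'' = F'') := fun h => hyF (h.1 ▸ hy)
  have hFy'' : Fy'' ≤ F' := by
    rcases pairs_separated 𝔽.chain hpair hyp hne with h | h
    · exact h
    · exact absurd (h (hpair.2.2.1.le hy)) hyF
  have hclos : clos B Fy' ≤ F' := by
    rcases (hclosed Fy' Fy'' hyp).2 with h | h
    · rw [h]; exact le_trans hyp.2.2.1.le hFy''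
    · rw [h]; exact hFy''
  have hu1 : u ∉ clos B Fy' := fun h => huF' (hclos h)
  have hu2 : ∀ c : ℂ, c ≠ 0 → y - c • u ∉ clos B Fy' := by
    intro c hc h
    apply huF'
    have h1 : c • u ∈ F' := by
      have := F'.sub_mem hy (hclos h)
      simpa using this
    have := F'.smul_mem c⁻¹ h1
    rwa [smul_smul, inv_mul_cancel₀ hc, one_smul] at this
  obtain ⟨w, hwP, hw1, hw0⟩ := exists_w B Fy' u y hu1 hu2
  refine ⟨toEnd B (y ⊗ₜ[ℂ] w), ⟨mem_slB_rank_one B hB₁ y w hy0 hw0, ?_⟩, ?_⟩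
  · exact stab_rank_one B 𝔽.chain hyp hwP hyG
  · rw [toEnd_tmul, hw1, one_smul]

end Aux7

/-- let `𝔽` be a maximal closed generalized flag in `V` and
`u ∈ V` nonzero, with immediate predecessor-successor pair `F'_u ⊂ F''_u`.
Then `St_𝔽 · u = F'_u` if the closure of `F'_u` equals `F''_u` or if
`F'_u ⊂ F''_u` is the only good pair of `𝔽`, and `St_𝔽 · u = F''_u`
otherwise, where `St_𝔽` is the stabilizer of `𝔽` in `𝔰𝔩(V,V_*)`. -/
theorem slStab_orbit {V W : Type*} [AddCommGroup V] [Module ℂ V]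
    [AddCommGroup W] [Module ℂ W]
    (hV : Module.rank ℂ V ≤ Cardinal.aleph0)
    (hW : Module.rank ℂ W ≤ Cardinal.aleph0)
    (B : V →ₗ[ℂ] W →ₗ[ℂ] ℂ)
    (hB₁ : ∀ v : V, (∀ w : W, B v w = 0) → v = 0)
    (hB₂ : ∀ w : W, (∀ v : V, B v w = 0) → w = 0)
    (𝔽 : GenFlag V) (hmax : 𝔽.IsMaxClosed B)
    (u : V) (hu : u ≠ 0)
    (F' F'' : Submodule ℂ V) (hpair : ImmPair 𝔽.carrier F' F'')
    (huF'' : u ∈ F'') (huF' : u ∉ F') :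
    ((clos B F' = F'' ∨
        (GoodPair B 𝔽.carrier F' F'' ∧
          ∀ G G' : Submodule ℂ V, GoodPair B 𝔽.carrier G G' →
            G = F' ∧ G' = F'')) →
      {y : V | ∃ f ∈ slStab B 𝔽.carrier, y = f u} = (F' : Set V)) ∧
    (¬(clos B F' = F'' ∨
        (GoodPair B 𝔽.carrier F' F'' ∧
          ∀ G G' : Submodule ℂ V, GoodPair B 𝔽.carrier G G' →
            G = F' ∧ G' = F'')) →
      {y : V | ∃ f ∈ slStab B 𝔽.carrier, y = f u} = (F'' : Set V)) := by
  obtain ⟨hclosed, hmax1⟩ := hmax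
  have hchain := 𝔽.chain
  have hF'O : (F' : Set V) ⊆ {y : V | ∃ f ∈ slStab B 𝔽.carrier, y = f u} := by
    intro y hy
    obtain ⟨f, hf, hfu⟩ := exists_stab_eq B hB₁ 𝔽 hclosed hpair huF'' huF' y hy
    exact ⟨f, hf, hfu.symm⟩
  constructor
  · rintro (hcase | ⟨hgood, huniq⟩)
    · -- Case: clos F' = F''
      refine Set.Subset.antisymm ?_ hF'O
      rintro y ⟨f, ⟨hf1, hf2⟩, rfl⟩
      obtain ⟨t, rfl, -⟩ := slB_repr B hf1
      exact toEnd_clos_mem B t F' (fun x hx => hf2 F' hpair.1 x hx) u (hcase ▸ huF'')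
    · -- Case: unique good pair
      refine Set.Subset.antisymm ?_ hF'O
      rintro y ⟨f, ⟨hf1, hf2⟩, rfl⟩
      obtain ⟨t, rfl, htr⟩ := slB_repr B hf1
      have hclF' : clos B F' = F' := hgood.2
      obtain ⟨w, hwP, hw1⟩ := exists_w_single B F' u (by rw [hclF']; exact huF')
      have hfu : toEnd B t u ∈ F'' := hf2 F'' hpair.2.1 u huF''
      obtain ⟨a, ha⟩ := quot_rank_one (hmax1 F' F'' hgood) huF'' huF' (toEnd B t u) hfu
      have hdiag : ∀ F G, ImmPair 𝔽.carrier F G →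
          ∀ x ∈ G, toEnd B (t - a • u ⊗ₜ[ℂ] w) x ∈ F := by
        intro F G hFG x hxG
        by_cases hFG' : F = F' ∧ G = F''
        · obtain ⟨rfl, rfl⟩ := hFG'
          obtain ⟨c, hc⟩ := quot_rank_one (hmax1 F G hgood) huF'' huF' x hxG
          have hBxw : B x w = c := by
            have h1 : B (x - c • u) w = 0 := hwP _ hc
            have h2 : B x w - c * B u w = 0 := by
              simpa [map_sub, map_smul, LinearMap.sub_apply, LinearMap.smul_apply,
                smul_eq_mul] using h1
            rw [hw1, mul_one] at h2
            exact sub_eq_zero.mp h2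
          have hx' : toEnd B t (x - c • u) ∈ F := hf2 F hpair.1 _ hc
          have hdecomp : toEnd B (t - a • u ⊗ₜ[ℂ] w) x
              = toEnd B t (x - c • u) + c • (toEnd B t u - a • u) := by
            simp only [map_sub, map_smul, LinearMap.sub_apply, LinearMap.smul_apply,
              toEnd_tmul, hBxw, smul_sub]
            module
          rw [hdecomp]
          exact F.add_mem hx' (F.smul_mem c ha)
        · have hclos : clos B F = G := by
            rcases (hclosed F G hFG).2 with h | h
            · exact absurd (huniq F G ⟨hFG, h⟩) hFG'
            · exact h
          have h1 : toEnd B t x ∈ F :=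
            toEnd_clos_mem B t F (fun z hz => hf2 F hFG.1 z hz) x (hclos ▸ hxG)
          have h2 : toEnd B (u ⊗ₜ[ℂ] w) x ∈ F := by
            have hne : ¬(F' = F ∧ F'' = G) := fun h => hFG' ⟨h.1.symm, h.2.symm⟩
            rcases pairs_separated hchain hFG hpair hne with h | h
            · rw [toEnd_tmul]
              exact F.smul_mem _ (h huF'')
            · rw [toEnd_tmul, hwP x (h hxG), zero_smul]
              exact F.zero_mem
          have heq : toEnd B (t - a • u ⊗ₜ[ℂ] w) x
              = toEnd B t x - a • toEnd B (u ⊗ₜ[ℂ] w) x := by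
            simp [map_sub, map_smul]
          rw [heq]
          exact F.sub_mem h1 (F.smul_mem a h2)
      have htr' := lemB B 𝔽 _ hdiag
      have ha0 : a = 0 := by
        rw [map_sub, map_smul, htr, TensorProduct.lift.tmul] at htr'
        simp only [smul_eq_mul, hw1, mul_one, zero_sub, neg_eq_zero] at htr'
        exact htr'
      rw [ha0, zero_smul, sub_zero] at ha
      exact ha
  · -- Case: otherwise
    intro hnot
    push_neg at hnot
    obtain ⟨hne, hnuniq⟩ := hnot
    have hgood : GoodPair B 𝔽.carrier F' F'' :=
      ⟨hpair, ((hclosed F' F'' hpair).2).resolve_right hne⟩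
    obtain ⟨G, G', hGP, hGne⟩ := hnuniq hgood
    have hclG : clos B G = G := hGP.2
    obtain ⟨z, hzG', hzG⟩ := SetLike.exists_of_lt hGP.1.2.2.1
    obtain ⟨w, hwP, hw1⟩ := exists_w_single B F' u (by rw [hgood.2]; exact huF')
    obtain ⟨w', hw'P, hw'1⟩ := exists_w_single B G z (by rw [hclG]; exact hzG)
    set f₀ := toEnd B (u ⊗ₜ[ℂ] w) - toEnd B (z ⊗ₜ[ℂ] w') with hf₀
    have hf₀slB : f₀ ∈ slB B := mem_slB_pair B u z w w' hw1 hw'1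
    have hf₀stab : ∀ F ∈ 𝔽.carrier, ∀ x ∈ F, f₀ x ∈ F := by
      intro F hF x hx
      have h1 := stab_rank_one B hchain hpair hwP huF'' F hF x hx
      have h2 := stab_rank_one B hchain hGP.1 hw'P hzG' F hF x hx
      rw [hf₀]
      exact F.sub_mem h1 h2
    have hf₀u : f₀ u = u - B u w' • z := by
      rw [hf₀]
      simp [toEnd_tmul, hw1]
    have hf₀uF' : f₀ u ∉ F' := by
      have hne2 : ¬(G = F' ∧ G' = F'') := fun h => hGne h.1 h.2
      rcases pairs_separated hchain hpair hGP.1 hne2 with h | h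
      · intro hmem
        apply huF'
        have hz' : B u w' • z ∈ F' := F'.smul_mem _ (h hzG')
        have := F'.add_mem hmem hz'
        rw [hf₀u] at this
        simpa using this
      · have h0 : B u w' = 0 := hw'P u (h huF'')
        rw [hf₀u, h0, zero_smul, sub_zero]
        exact huF'
    have hf₀uO : f₀ u ∈ {y : V | ∃ f ∈ slStab B 𝔽.carrier, y = f u} :=
      ⟨f₀, ⟨hf₀slB, hf₀stab⟩, rfl⟩
    have hf₀uF'' : f₀ u ∈ F'' := hf₀stab F'' hpair.2.1 u huF''
    refine Set.Subset.antisymm ?_ ?_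
    · rintro y ⟨f, ⟨hf1, hf2⟩, rfl⟩
      exact hf2 F'' hpair.2.1 u huF''
    · intro x hx
      obtain ⟨c, hc⟩ := quot_rank_one (hmax1 F' F'' hgood) hf₀uF'' hf₀uF' x hx
      obtain ⟨g, hg, hgu⟩ := exists_stab_eq B hB₁ 𝔽 hclosed hpair huF'' huF' _ hc
      refine ⟨g + c • f₀, ⟨?_, ?_⟩, ?_⟩
      · exact (slB B).add_mem hg.1 ((slB B).smul_mem c hf₀slB)
      · intro F hF z' hz'
        exact F.add_mem (hg.2 F hF z' hz') (F.smul_mem c (hf₀stab F hF z' hz'))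
      · have : (g + c • f₀) u = g u + c • f₀ u := by simp
        rw [this, hgu]
        abel
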